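/- arXiv:2409.12689 — 3 statements merged into one kernel-verified Lean document; each statement's English description precedes it below -/
import Mathlib

section
/- If a vector x in R^n majorizes a vector y in R^n, and f : R → R is concave, then the sum of f(x_i) over i is less than or equal to the sum of f(y_i) over i. -/
open Finset

/-- Sum of the `k` largest entries of `x`, expressed as the supremum of sums over
subsets of cardinality `k`. -/
noncomputable def topSum {n : ℕ} (x : Fin n → ℝ) (k : ℕ) : ℝ :=
  sSup {r : ℝ | ∃ s : Finset (Fin n), s.card = k ∧ r = ∑ i ∈ s, x i}

/-- `x` majorizes `y`: every partial sum of the sorted-descending version of `x`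
dominates that of `y`, and the total sums agree. -/
def Majorizes {n : ℕ} (x y : Fin n → ℝ) : Prop :=
  (∀ k : ℕ, k < n → topSum y k ≤ topSum x k) ∧ (∑ i, x i = ∑ i, y i)

/-!
Sort both vectors increasingly, `a = x ∘ σ` and `b = y ∘ τ`. Majorization says exactly that every
initial sum of `a` is at most the corresponding initial sum of `b`, with equality for the full sum.
For convex `f` with right derivative `g`, the tangent-line bound gives
`∑ f (a i) ≥ ∑ f (b i) + ∑ g (b i) * (a i - b i)`; since `g ∘ b` is monotone, summation by parts
against the nonpositive partial sums of `a - b` makes the last sum nonnegative. The concave case is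
the convex one applied to `-f`.
-/

theorem Finset.sum_le_sum_of_card_eq_of_forall_sdiff_le {ι M : Type*} [DecidableEq ι]
    [AddCommMonoid M] [LinearOrder M] [IsOrderedAddMonoid M] {s t : Finset ι} {f : ι → M}
    (hst : #s = #t) (hf : ∀ i ∈ s \ t, ∀ j ∈ t \ s, f i ≤ f j) :
    ∑ i ∈ s, f i ≤ ∑ i ∈ t, f i := by
  have hcard := card_sdiff_comm hst
  obtain ⟨c, hs, ht⟩ : ∃ c, (∀ i ∈ s \ t, f i ≤ c) ∧ ∀ j ∈ t \ s, c ≤ f j := by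
    rcases (s \ t).eq_empty_or_nonempty with h | h
    · have h' : t \ s = ∅ := by rw [← card_eq_zero, ← hcard, h, card_empty]
      exact ⟨0, by simp [h], by simp [h']⟩
    · exact ⟨(s \ t).sup' h f, fun i hi => le_sup' f hi,
        fun j hj => sup'_le h f fun i hi => hf i hi j hj⟩
  calc ∑ i ∈ s, f i = ∑ i ∈ s ∩ t, f i + ∑ i ∈ s \ t, f i :=
        (sum_inter_add_sum_sdiff s t f).symm
    _ ≤ ∑ i ∈ s ∩ t, f i + #(s \ t) • c := by grw [sum_le_card_nsmul _ _ _ hs]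
    _ = ∑ i ∈ t ∩ s, f i + #(t \ s) • c := by rw [inter_comm, hcard]
    _ ≤ ∑ i ∈ t ∩ s, f i + ∑ i ∈ t \ s, f i := by grw [card_nsmul_le_sum _ _ _ ht]
    _ = ∑ i ∈ t, f i := sum_inter_add_sum_sdiff t s f

section PartialSums

variable {ι R : Type*} [LinearOrder ι] [CommRing R] [LinearOrder R] [IsStrictOrderedRing R]
  {s : Finset ι} {c d : ι → R}

theorem Finset.mul_sum_le_sum_mul_of_partialSums_nonpos {t : R} (hc : MonotoneOn c s)
    (ht : ∀ i ∈ s, c i ≤ t) (hd : ∀ j ∈ s, ∑ i ∈ s with i ≤ j, d i ≤ 0) :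
    t * ∑ i ∈ s, d i ≤ ∑ i ∈ s, c i * d i := by
  induction s using Finset.induction_on_max generalizing t with
  | empty => simp
  | insert a s ha ih =>
    have ha' : a ∉ s := fun h => lt_irrefl a (ha a h)
    have hs : c a * ∑ i ∈ s, d i ≤ ∑ i ∈ s, c i * d i := by
      have hca : ∀ i ∈ s, c i ≤ c a := fun i hi =>
        hc (mem_insert_of_mem hi) (mem_insert_self a s) (ha i hi).le
      refine ih (hc.mono (subset_insert a s)) hca fun j hj => ?_
      simpa [filter_insert, (ha j hj).not_ge] using hd j (mem_insert_of_mem hj)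
    have htotal : d a + ∑ i ∈ s, d i ≤ 0 := by
      have hle : ∀ i ∈ insert a s, i ≤ a := by
        simpa using fun i hi => (ha i hi).le
      simpa [filter_true_of_mem hle, ha'] using hd a (mem_insert_self a s)
    rw [sum_insert ha', sum_insert ha']
    linarith [mul_nonpos_of_nonneg_of_nonpos (sub_nonneg.2 (ht a (mem_insert_self a s))) htotal]

theorem Finset.sum_mul_nonneg_of_partialSums_nonpos (hc : MonotoneOn c s)
    (hd : ∀ j ∈ s, ∑ i ∈ s with i ≤ j, d i ≤ 0) (hsum : ∑ i ∈ s, d i = 0) :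
    0 ≤ ∑ i ∈ s, c i * d i := by
  obtain ⟨t, ht⟩ := (s.image c).bddAbove
  simpa [hsum] using mul_sum_le_sum_mul_of_partialSums_nonpos hc
    (fun i hi => ht (mem_coe.2 (mem_image_of_mem c hi))) hd

end PartialSums

namespace ConvexOn

variable {f : ℝ → ℝ}

theorem add_rightDeriv_mul_sub_le (hf : ConvexOn ℝ Set.univ f) (t s : ℝ) :
    f t + derivWithin f (Set.Ioi t) t * (s - t) ≤ f s := by
  have ht : t ∈ interior Set.univ := by simp
  rcases lt_trichotomy t s with hts | rfl | hst
  · have := hf.rightDeriv_le_slope_of_mem_interior ht (Set.mem_univ s) hts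
    rw [slope_def_field, le_div_iff₀ (sub_pos.2 hts)] at this
    linarith
  · simp
  · have := (hf.slope_le_leftDeriv_of_mem_interior (Set.mem_univ s) ht hst).trans
      (hf.leftDeriv_le_rightDeriv_of_mem_interior ht)
    rw [slope_def_field, div_le_iff₀ (sub_pos.2 hst)] at this
    linarith

theorem monotone_rightDeriv (hf : ConvexOn ℝ Set.univ f) :
    Monotone fun t => derivWithin f (Set.Ioi t) t := by
  simpa using hf.monotoneOn_rightDeriv

end ConvexOn

section BottomSum

variable {n : ℕ}

noncomputable def bottomSum (x : Fin n → ℝ) (k : ℕ) : ℝ :=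
  ∑ j ∈ {j : Fin n | (j : ℕ) < k}, x (Tuple.sort x j)

theorem bottomSum_le_sum_of_card_eq (x : Fin n → ℝ) {k : ℕ} {s : Finset (Fin n)}
    (hs : #s = k) : bottomSum x k ≤ ∑ i ∈ s, x i := by
  have hk : k ≤ n := hs ▸ (card_le_univ s).trans_eq (Fintype.card_fin n)
  rw [bottomSum]
  calc _ ≤ ∑ j ∈ s.map (Tuple.sort x).symm.toEmbedding, x (Tuple.sort x j) := by
        refine sum_le_sum_of_card_eq_of_forall_sdiff_le ?_ fun i hi j hj => ?_
        · rw [card_map, hs, Fin.card_filter_val_lt, min_eq_right hk]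
        · simp only [mem_sdiff, mem_filter, mem_univ, true_and] at hi hj
          exact Tuple.monotone_sort x (Fin.le_def.2 (by omega))
    _ = ∑ i ∈ s, x i := by simp [sum_map]

theorem topSum_add_bottomSum (x : Fin n → ℝ) {k : ℕ} (hk : k ≤ n) :
    topSum x (n - k) + bottomSum x k = ∑ i, x i := by
  set B := ({j : Fin n | (j : ℕ) < k} : Finset (Fin n)).map (Tuple.sort x).toEmbedding
  have hB : ∑ i ∈ B, x i = bottomSum x k := by simp [B, bottomSum, sum_map]
  have hBcard : #B = k := by simp [B, Fin.card_filter_val_lt, hk]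
  suffices IsGreatest {r | ∃ s : Finset (Fin n), #s = n - k ∧ r = ∑ i ∈ s, x i}
      (∑ i, x i - bottomSum x k) by
    rw [topSum, this.csSup_eq]
    ring
  refine ⟨⟨Bᶜ, by rw [card_compl, Fintype.card_fin, hBcard], ?_⟩, ?_⟩
  · linarith [sum_compl_add_sum B x]
  · rintro _ ⟨s, hs, rfl⟩
    have hsc : #sᶜ = k := by rw [card_compl, Fintype.card_fin, hs]; omega
    linarith [bottomSum_le_sum_of_card_eq x hsc, sum_compl_add_sum s x]

theorem Majorizes.bottomSum_le {x y : Fin n → ℝ} (hmaj : Majorizes x y) {k : ℕ} (hk : k ≤ n) :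
    bottomSum x k ≤ bottomSum y k := by
  rcases k.eq_zero_or_pos with rfl | hk0
  · simp [bottomSum]
  · linarith [hmaj.1 (n - k) (by omega), topSum_add_bottomSum x hk, topSum_add_bottomSum y hk,
      hmaj.2]

theorem Majorizes.sum_le_sum_of_convexOn {x y : Fin n → ℝ} {f : ℝ → ℝ}
    (hmaj : Majorizes x y) (hf : ConvexOn ℝ Set.univ f) :
    ∑ i, f (y i) ≤ ∑ i, f (x i) := by
  let a i := x (Tuple.sort x i)
  let b i := y (Tuple.sort y i)
  let g t := derivWithin f (Set.Ioi t) t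
  have hprefix : ∀ j ∈ (univ : Finset (Fin n)), ∑ i ∈ univ with i ≤ j, (a i - b i) ≤ 0 := by
    intro j _
    have hle := hmaj.bottomSum_le (k := j + 1) j.isLt
    have hfilter : univ.filter (fun i : Fin n => (i : ℕ) < j + 1) = univ.filter (· ≤ j) := by
      ext i
      simp only [mem_filter, mem_univ, true_and, Fin.le_def]
      omega
    rw [bottomSum, bottomSum, hfilter] at hle
    exact sum_sub_distrib (f := a) (g := b) ▸ sub_nonpos.2 hle
  have htotal : ∑ i, (a i - b i) = 0 := by
    rw [sum_sub_distrib, sub_eq_zero, Equiv.sum_comp (Tuple.sort x) x,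
      Equiv.sum_comp (Tuple.sort y) y, hmaj.2]
  have hg : MonotoneOn (fun i => g (b i)) (univ : Finset (Fin n)) :=
    (hf.monotone_rightDeriv.comp (Tuple.monotone_sort y)).monotoneOn _
  have hcorr : 0 ≤ ∑ i, g (b i) * (a i - b i) :=
    sum_mul_nonneg_of_partialSums_nonpos hg hprefix htotal
  calc ∑ i, f (y i) = ∑ i, f (b i) := (Equiv.sum_comp (Tuple.sort y) (fun i => f (y i))).symm
    _ ≤ ∑ i, (f (b i) + g (b i) * (a i - b i)) := by rw [sum_add_distrib]; linarith
    _ ≤ ∑ i, f (a i) := sum_le_sum fun i _ => hf.add_rightDeriv_mul_sub_le _ _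
    _ = ∑ i, f (x i) := Equiv.sum_comp (Tuple.sort x) (fun i => f (x i))

end BottomSum

/-- Karamata's inequality for concave functions. -/
theorem karamata_concave {n : ℕ} (x y : Fin n → ℝ) (f : ℝ → ℝ)
    (hmaj : Majorizes x y) (hf : ConcaveOn ℝ Set.univ f) :
    ∑ i, f (x i) ≤ ∑ i, f (y i) := by
  simpa using hmaj.sum_le_sum_of_convexOn hf.neg
end

section
/- If x majorizes y in R^n and f is strictly concave, and x is not a permutation of y, then Σ f(x_i) < Σ f(y_i). -/
open Finset

/-!
Sort `x` and `y` decreasingly to `a` and `b`. Majorization says that the partial sums of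
`a - b` are nonnegative and that its total vanishes. With `g i` the right derivative of `f` at
`b i`, concavity gives the supporting-line bound `f (a i) ≤ f (b i) + g i * (a i - b i)`, strict
wherever `a i ≠ b i`, and such an index exists because `x` is not a permutation of `y`. As `b`
decreases and `f` is concave, `g` increases, so by Abel summation `∑ i, g i * (a i - b i) ≤ 0`.
-/

lemma sum_le_sum_of_card_eq_of_forall_le {ι M : Type*} [AddCommMonoid M] [LinearOrder M]
    [IsOrderedAddMonoid M] {s t : Finset ι} {f : ι → M} (hcard : #s = #t)
    (hf : ∀ i ∈ s, ∀ j ∈ t, f i ≤ f j) : ∑ i ∈ s, f i ≤ ∑ j ∈ t, f j := by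
  obtain rfl | ht := t.eq_empty_or_nonempty
  · simp [card_eq_zero.1 hcard]
  calc ∑ i ∈ s, f i ≤ #s • t.inf' ht f :=
        sum_le_card_nsmul _ _ _ fun i hi => le_inf' ht f (hf i hi)
    _ = #t • t.inf' ht f := by rw [hcard]
    _ ≤ ∑ j ∈ t, f j := card_nsmul_le_sum _ _ _ fun j hj => inf'_le f hj

def prefixSum {n : ℕ} (a : Fin n → ℝ) (k : ℕ) : ℝ :=
  ∑ i with i.val < k, a i

lemma prefixSum_of_le {n k : ℕ} (a : Fin n → ℝ) (hk : n ≤ k) : prefixSum a k = ∑ i, a i :=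
  sum_congr (filter_true_of_mem fun i _ => i.2.trans_le hk) fun _ _ => rfl

lemma prefixSum_comp_castSucc {n k : ℕ} (a : Fin (n + 1) → ℝ) (hk : k ≤ n) :
    prefixSum (a ∘ Fin.castSucc) k = prefixSum a k := by
  simp [prefixSum, sum_filter, Fin.sum_univ_castSucc, hk.not_gt]

lemma sum_mul_le_mul_sum_of_monotone {n : ℕ} {c d : Fin n → ℝ} {t : ℝ} (hc : Monotone c)
    (hct : ∀ i, c i ≤ t) (hd : ∀ k ≤ n, 0 ≤ prefixSum d k) :
    ∑ i, c i * d i ≤ t * ∑ i, d i := by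
  induction n generalizing t with
  | zero => simp
  | succ n ih =>
    have hlast : c (Fin.last n) ≤ t := hct _
    have hinit := ih (c := c ∘ Fin.castSucc) (d := d ∘ Fin.castSucc)
      (hc.comp Fin.strictMono_castSucc.monotone) (fun i => hc (Fin.le_last _))
      (fun k hk => prefixSum_comp_castSucc d hk ▸ hd k (by omega))
    have htotal : 0 ≤ ∑ i, d i := prefixSum_of_le d le_rfl ▸ hd (n + 1) le_rfl
    calc ∑ i, c i * d i
        = ∑ i : Fin n, c i.castSucc * d i.castSucc + c (Fin.last n) * d (Fin.last n) :=
          Fin.sum_univ_castSucc _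
      _ ≤ c (Fin.last n) * ∑ i : Fin n, d i.castSucc + c (Fin.last n) * d (Fin.last n) := by
          gcongr; exact hinit
      _ = c (Fin.last n) * ∑ i, d i := by rw [Fin.sum_univ_castSucc, mul_add]
      _ ≤ t * ∑ i, d i := mul_le_mul_of_nonneg_right hlast htotal

lemma sum_le_prefixSum_of_antitone {n k : ℕ} {a : Fin n → ℝ} (ha : Antitone a)
    {s : Finset (Fin n)} (hs : #s = k) : ∑ i ∈ s, a i ≤ prefixSum a k := by
  have hkn : k ≤ n := by simpa [hs] using card_le_univ s
  refine sum_sdiff_le_sum_sdiff.1 (sum_le_sum_of_card_eq_of_forall_le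
    (card_sdiff_comm (by rw [Fin.card_filter_val_lt]; omega)) fun i hi j hj => ha ?_)
  simp only [mem_sdiff, mem_filter, mem_univ, true_and] at hi hj
  exact Fin.le_def.2 (by omega)

lemma topSum_eq_prefixSum_of_antitone {n k : ℕ} {a : Fin n → ℝ} (ha : Antitone a) (hk : k ≤ n) :
    topSum a k = prefixSum a k :=
  IsGreatest.csSup_eq
    ⟨⟨({i | i.val < k} : Finset (Fin n)), by rw [Fin.card_filter_val_lt]; omega, rfl⟩,
      by rintro _ ⟨s, hs, rfl⟩; exact sum_le_prefixSum_of_antitone ha hs⟩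

lemma topSum_comp_perm {n : ℕ} (x : Fin n → ℝ) (σ : Equiv.Perm (Fin n)) (k : ℕ) :
    topSum (x ∘ σ) k = topSum x k := by
  unfold topSum
  congr 1
  ext r
  constructor
  · rintro ⟨s, hs, rfl⟩
    exact ⟨s.map σ.toEmbedding, by simp [hs], by simp [sum_map]⟩
  · rintro ⟨s, hs, rfl⟩
    exact ⟨s.map σ.symm.toEmbedding, by simp [hs], by simp [sum_map]⟩

lemma exists_perm_antitone_comp {n : ℕ} {α : Type*} [LinearOrder α] (x : Fin n → α) :
    ∃ σ : Equiv.Perm (Fin n), Antitone (x ∘ σ) :=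
  ⟨Fin.revPerm.trans (Tuple.sort x), (Tuple.monotone_sort x).comp_antitone Fin.rev_anti⟩

section RightDeriv

variable {S : Set ℝ} {f : ℝ → ℝ} {x y : ℝ}

open Set

lemma ConcaveOn.antitoneOn_rightDeriv (hf : ConcaveOn ℝ S f) :
    AntitoneOn (fun x => derivWithin f (Ioi x) x) (interior S) := by
  intro x hx y hy hxy
  simpa [derivWithin.neg] using hf.neg.monotoneOn_rightDeriv hx hy hxy

lemma StrictConcaveOn.lt_add_rightDeriv_mul (hf : StrictConcaveOn ℝ S f) (hx : x ∈ interior S)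
    (hy : y ∈ S) (hyx : y ≠ x) : f y < f x + derivWithin f (Ioi x) x * (y - x) := by
  rcases hyx.lt_or_gt with hlt | hgt
  · have hleft : DifferentiableWithinAt ℝ f (Iio x) x := by
      simpa using (hf.concaveOn.neg.hasDerivWithinAt_sSup_slope_of_mem_interior hx
        ).differentiableWithinAt.neg
    have hright_le_left : derivWithin f (Ioi x) x ≤ derivWithin f (Iio x) x := by
      simpa [derivWithin.neg] using hf.concaveOn.neg.leftDeriv_le_rightDeriv_of_mem_interior hx
    have hslope := hf.leftDeriv_lt_slope hy (interior_subset hx) hlt hleft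
    rw [slope_def_field, lt_div_iff₀ (sub_pos.2 hlt)] at hslope
    nlinarith
  · have hright : DifferentiableWithinAt ℝ f (Ioi x) x := by
      simpa using (hf.concaveOn.neg.hasDerivWithinAt_sInf_slope_of_mem_interior hx
        ).differentiableWithinAt.neg
    have hslope := hf.slope_lt_rightDeriv (interior_subset hx) hy hgt hright
    rw [slope_def_field, div_lt_iff₀ (sub_pos.2 hgt)] at hslope
    linarith

end RightDeriv

theorem StrictConcaveOn.sum_lt_sum_of_prefixSum_le {n : ℕ} {S : Set ℝ} {f : ℝ → ℝ}
    (hf : StrictConcaveOn ℝ S f) {a b : Fin n → ℝ} (haS : ∀ i, a i ∈ S)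
    (hbS : ∀ i, b i ∈ interior S) (hb : Antitone b)
    (hprefix : ∀ k < n, prefixSum b k ≤ prefixSum a k) (hsum : ∑ i, a i = ∑ i, b i)
    (hab : a ≠ b) : ∑ i, f (a i) < ∑ i, f (b i) := by
  set g : Fin n → ℝ := fun i => derivWithin f (Set.Ioi (b i)) (b i)
  have hg : Monotone g := fun i j hij =>
    hf.concaveOn.antitoneOn_rightDeriv (hbS j) (hbS i) (hb hij)
  have hsupport : ∀ i, f (a i) ≤ f (b i) + g i * (a i - b i) := by
    intro i
    rcases eq_or_ne (a i) (b i) with h | h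
    · simp [h]
    · exact (hf.lt_add_rightDeriv_mul (hbS i) (haS i) h).le
  have habel : ∑ i, g i * (a i - b i) ≤ 0 := by
    obtain ⟨t, ht⟩ := (Set.finite_range g).bddAbove
    have hdiff : ∀ k ≤ n, 0 ≤ prefixSum (a - b) k := by
      intro k hk
      rw [show prefixSum (a - b) k = prefixSum a k - prefixSum b k from sum_sub_distrib _ _,
        sub_nonneg]
      rcases hk.lt_or_eq with hk | rfl
      · exact hprefix k hk
      · rw [prefixSum_of_le a le_rfl, prefixSum_of_le b le_rfl, hsum]
    simpa [sum_sub_distrib, hsum] using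
      sum_mul_le_mul_sum_of_monotone hg (fun i => ht ⟨i, rfl⟩) hdiff
  obtain ⟨i, hi⟩ := Function.ne_iff.1 hab
  calc ∑ i, f (a i) < ∑ i, (f (b i) + g i * (a i - b i)) :=
        sum_lt_sum (fun i _ => hsupport i)
          ⟨i, mem_univ i, hf.lt_add_rightDeriv_mul (hbS i) (haS i) hi⟩
    _ = ∑ i, f (b i) + ∑ i, g i * (a i - b i) := sum_add_distrib
    _ ≤ ∑ i, f (b i) := add_le_of_nonpos_right habel

/-- Strict Karamata inequality: if `x` majorizes `y`, `f` is strictly concave and `x`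
is not a permutation of `y`, then `∑ f (x i) < ∑ f (y i)`. -/
theorem karamata_strict_concave {n : ℕ} (x y : Fin n → ℝ) (f : ℝ → ℝ)
    (hmaj : Majorizes x y) (hf : StrictConcaveOn ℝ Set.univ f)
    (hnp : ¬ ∃ σ : Equiv.Perm (Fin n), y = x ∘ σ) :
    ∑ i, f (x i) < ∑ i, f (y i) := by
  obtain ⟨σ, hσ⟩ := exists_perm_antitone_comp x
  obtain ⟨τ, hτ⟩ := exists_perm_antitone_comp y
  have hprefix (k : ℕ) (hk : k < n) : prefixSum (y ∘ τ) k ≤ prefixSum (x ∘ σ) k := by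
    rw [← topSum_eq_prefixSum_of_antitone hτ hk.le, ← topSum_eq_prefixSum_of_antitone hσ hk.le,
      topSum_comp_perm, topSum_comp_perm]
    exact hmaj.1 k hk
  have hsorted_ne : x ∘ σ ≠ y ∘ τ := fun h =>
    hnp ⟨τ.symm.trans σ, funext fun i => by simpa using (congrFun h (τ.symm i)).symm⟩
  have hsorted := hf.sum_lt_sum_of_prefixSum_le (a := x ∘ σ) (fun _ => Set.mem_univ _)
    (fun _ => by simp) hτ hprefix (by simpa [Equiv.sum_comp] using hmaj.2) hsorted_ne
  simpa [Equiv.sum_comp σ (fun i => f (x i)), Equiv.sum_comp τ (fun i => f (y i))] using hsorted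
end

section
/- Let K₁, K₂ ∈ R^n be nonnegative vectors with equal sums, where K₁ is sorted in nonincreasing order when read from index n−1 down to 0 (densities decreasing upstream) and K₂ is sorted in nonincreasing order from index 0 up to n−1 (densities decreasing downstream). Suppose additionally that for every index m, if the m-th largest entry of K₁ is at least the m-th largest entry of K₂, then for all m' > m the m'-th largest entry of K₁ strictly exceeds that of K₂. Then K₂ majorizes K₁, i.e., for every k, the sum of the k largest entries of K₂ is at least the sum of the k largest entries of K₁. -/
open Finset

lemma topSum_bddAbove {n : ℕ} (x : Fin n → ℝ) (k : ℕ) :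
    BddAbove {r : ℝ | ∃ s : Finset (Fin n), s.card = k ∧ r = ∑ i ∈ s, x i} := by
  have h : {r : ℝ | ∃ s : Finset (Fin n), s.card = k ∧ r = ∑ i ∈ s, x i}
      = (fun s : Finset (Fin n) => ∑ i ∈ s, x i) '' {s | s.card = k} := by
    ext r; simp [eq_comm]
  rw [h]
  exact Set.Finite.bddAbove ((Set.toFinite _).image _)

lemma le_topSum {n : ℕ} (x : Fin n → ℝ) {k : ℕ} (s : Finset (Fin n)) (hs : s.card = k) :
    ∑ i ∈ s, x i ≤ topSum x k :=
  le_csSup (topSum_bddAbove x k) ⟨s, hs, rfl⟩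

lemma topSum_le {n : ℕ} (x : Fin n → ℝ) {k : ℕ} (hk : k ≤ n) (c : ℝ)
    (h : ∀ s : Finset (Fin n), s.card = k → ∑ i ∈ s, x i ≤ c) :
    topSum x k ≤ c := by
  obtain ⟨s, -, hs⟩ := Finset.exists_subset_card_eq (s := (univ : Finset (Fin n))) (n := k)
    (by simpa using hk)
  exact csSup_le ⟨_, s, hs, rfl⟩ (by rintro r ⟨t, ht, rfl⟩; exact h t ht)

lemma card_topSet {n k : ℕ} (hk : k ≤ n) :
    (univ.filter (fun i : Fin n => (i : ℕ) < k)).card = k := by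
  have : (univ.filter (fun i : Fin n => (i : ℕ) < k))
      = Finset.map (Fin.castLEEmb hk) univ := by
    ext i
    simp only [mem_filter, mem_univ, true_and, Finset.mem_map]
    constructor
    · intro hi; exact ⟨⟨i, hi⟩, by simp [Fin.castLEEmb, Fin.ext_iff]⟩
    · rintro ⟨j, rfl⟩; simpa [Fin.castLEEmb] using j.isLt
  rw [this]; simp

/-- For an antitone `g`, any `k`-subset sum is at most the sum over the first `k` indices. -/
lemma sum_le_sum_topSet {n k : ℕ} (g : Fin n → ℝ) (hg : Antitone g) (hk : k ≤ n)
    (s : Finset (Fin n)) (hs : s.card = k) :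
    ∑ i ∈ s, g i ≤ ∑ i ∈ univ.filter (fun i : Fin n => (i : ℕ) < k), g i := by
  set T := univ.filter (fun i : Fin n => (i : ℕ) < k) with hTdef
  have hT : T.card = k := card_topSet hk
  have hcross : ∀ a ∈ s \ T, ∀ b ∈ T \ s, g a ≤ g b := by
    intro a ha b hb
    have haT : ¬ ((a : ℕ) < k) := by
      have := (Finset.mem_sdiff.mp ha).2
      simpa [hTdef] using this
    have hbT : (b : ℕ) < k := by
      have := (Finset.mem_sdiff.mp hb).1
      simpa [hTdef] using this
    exact hg (by omega : b ≤ a)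
  have hcard : (s \ T).card = (T \ s).card := Finset.card_sdiff_comm (hs.trans hT.symm)
  have hAB : ∑ i ∈ s \ T, g i ≤ ∑ i ∈ T \ s, g i := by
    rcases Finset.eq_empty_or_nonempty (T \ s) with hB | hB
    · have : s \ T = ∅ := Finset.card_eq_zero.mp (by rw [hcard, hB]; simp)
      simp [this, hB]
    · set m := (T \ s).inf' hB g with hm
      calc ∑ i ∈ s \ T, g i ≤ ∑ _i ∈ s \ T, m := by
            refine Finset.sum_le_sum fun a ha => ?_
            exact Finset.le_inf' hB g fun b hb => hcross a ha b hb
        _ = (s \ T).card • m := by rw [Finset.sum_const]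
        _ = (T \ s).card • m := by rw [hcard]
        _ = ∑ _i ∈ T \ s, m := by rw [Finset.sum_const]
        _ ≤ ∑ i ∈ T \ s, g i := Finset.sum_le_sum fun b hb => Finset.inf'_le g hb
  have h1 : ∑ i ∈ s ∩ T, g i + ∑ i ∈ s \ T, g i = ∑ i ∈ s, g i :=
    Finset.sum_inter_add_sum_sdiff s T g
  have h2 : ∑ i ∈ T ∩ s, g i + ∑ i ∈ T \ s, g i = ∑ i ∈ T, g i :=
    Finset.sum_inter_add_sum_sdiff T s g
  rw [Finset.inter_comm] at h1
  linarith

/-- Discretized density profiles: `K₁` is nonincreasing when read from index `n-1`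
down to `0` (i.e. monotone in the index), `K₂` is nonincreasing from index `0` up
(antitone). Both are nonnegative with equal sums. Under the step-dominance
hypothesis (whenever the `m`-th largest entry of `K₁` is at least that of `K₂`,
all later ranked entries of `K₁` strictly exceed those of `K₂`), `K₂` majorizes
`K₁`: every partial sum of the `k` largest entries of `K₂` dominates that of `K₁`. -/
theorem offset_profile_majorizes_onset_profile {n : ℕ}
    (K₁ K₂ : Fin n → ℝ)
    (h₁nn : ∀ i, 0 ≤ K₁ i) (h₂nn : ∀ i, 0 ≤ K₂ i)
    (hsum : ∑ i, K₁ i = ∑ i, K₂ i)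
    (h₁sorted : Monotone K₁)  -- sorted descending when read from index n-1 down to 0
    (h₂sorted : Antitone K₂)  -- sorted descending from index 0 up
    (hstep : ∀ m : Fin n, K₂ m ≤ K₁ m.rev →
      ∀ m' : Fin n, m < m' → K₂ m' < K₁ m'.rev) :
    ∀ k : ℕ, k ≤ n → topSum K₁ k ≤ topSum K₂ k := by
  intro k hk
  set T := univ.filter (fun i : Fin n => (i : ℕ) < k) with hTdef
  have hg : Antitone (fun i : Fin n => K₁ i.rev) := by
    intro i j hij
    exact h₁sorted (Fin.rev_le_rev.mpr hij)
  -- topSum K₁ k ≤ ∑ i ∈ T, K₁ i.rev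
  have step1 : topSum K₁ k ≤ ∑ i ∈ T, K₁ i.rev := by
    refine topSum_le K₁ hk _ (fun s hs => ?_)
    have hinj : Function.Injective (Fin.rev : Fin n → Fin n) :=
      Fin.rev_involutive.injective
    have hcard : (s.image Fin.rev).card = k := by
      rw [Finset.card_image_of_injective _ hinj, hs]
    have heq : ∑ i ∈ s.image Fin.rev, K₁ i.rev = ∑ i ∈ s, K₁ i := by
      rw [Finset.sum_image (fun a _ b _ h => hinj h)]
      simp [Fin.rev_rev]
    calc ∑ i ∈ s, K₁ i = ∑ i ∈ s.image Fin.rev, K₁ i.rev := heq.symm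
      _ ≤ ∑ i ∈ T, K₁ i.rev := sum_le_sum_topSet _ hg hk _ hcard
  -- core: ∑ i ∈ T, K₁ i.rev ≤ ∑ i ∈ T, K₂ i
  have core : ∑ i ∈ T, K₁ i.rev ≤ ∑ i ∈ T, K₂ i := by
    by_contra hcon
    push_neg at hcon
    -- exists m ∈ T with K₂ m ≤ K₁ m.rev
    have hex : ∃ m ∈ T, K₂ m ≤ K₁ m.rev := by
      by_contra hno
      push_neg at hno
      exact absurd (Finset.sum_le_sum (fun i hi => (hno i hi).le)) (not_le.mpr hcon)
    obtain ⟨m₀, hm₀T, hm₀⟩ := hex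
    have hm₀k : (m₀ : ℕ) < k := by simpa [hTdef] using hm₀T
    have htail : ∑ i ∈ Tᶜ, K₂ i ≤ ∑ i ∈ Tᶜ, K₁ i.rev := by
      refine Finset.sum_le_sum fun i hi => ?_
      have hik : ¬ ((i : ℕ) < k) := by
        have := Finset.mem_compl.mp hi
        simpa [hTdef] using this
      exact (hstep m₀ hm₀ i (Fin.lt_def.mpr (by omega))).le
    have hsplit1 : ∑ i ∈ T, K₁ i.rev + ∑ i ∈ Tᶜ, K₁ i.rev = ∑ i : Fin n, K₁ i.rev :=
      Finset.sum_add_sum_compl T _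
    have hsplit2 : ∑ i ∈ T, K₂ i + ∑ i ∈ Tᶜ, K₂ i = ∑ i, K₂ i :=
      Finset.sum_add_sum_compl T _
    have hrev : ∑ i : Fin n, K₁ i.rev = ∑ i, K₁ i :=
      Fintype.sum_bijective Fin.rev Fin.rev_involutive.bijective _ _ (fun i => rfl)
    linarith
  -- ∑ i ∈ T, K₂ i ≤ topSum K₂ k
  have step3 : ∑ i ∈ T, K₂ i ≤ topSum K₂ k :=
    le_topSum K₂ T (card_topSet hk)
  linarith
end
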